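/- Let G be a snark with df(G) = 3, let C be a hexagonal core of an optimal 3-array M of G, and let T be a triangle of G with C ∩ T nonempty. Then C ∩ T consists of exactly one edge, and this edge is uncovered by M. -/

import Mathlib

open SimpleGraph

variable {V : Type} [Fintype V] [DecidableEq V]

/-- A cubic graph: every vertex has exactly three neighbours. -/
def IsCubic (G : SimpleGraph V) : Prop := ∀ v : V, (G.neighborSet v).ncard = 3

/-- A proper 3-edge-colouring: adjacent (distinct, vertex-sharing) edges get distinct colours. -/
def ProperEdgeColoring (G : SimpleGraph V) (c : Sym2 V → Fin 3) : Prop :=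
  ∀ e₁ ∈ G.edgeSet, ∀ e₂ ∈ G.edgeSet, e₁ ≠ e₂ → (∃ v : V, v ∈ e₁ ∧ v ∈ e₂) → c e₁ ≠ c e₂

def ThreeEdgeColorable (G : SimpleGraph V) : Prop :=
  ∃ c : Sym2 V → Fin 3, ProperEdgeColoring G c

/-- 2-connectedness: at least 3 vertices, connected, and deleting any vertex leaves it connected. -/
def TwoConnected (G : SimpleGraph V) : Prop :=
  3 ≤ Fintype.card V ∧ G.Connected ∧
    ∀ v : V, ((⊤ : G.Subgraph).deleteVerts {v}).coe.Connected

/-- A snark: a 2-connected cubic graph with no proper 3-edge-colouring. -/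
def IsSnark (G : SimpleGraph V) : Prop :=
  IsCubic G ∧ TwoConnected G ∧ ¬ ThreeEdgeColorable G

/-- The set of edges left uncovered by a 3-array of perfect matchings. -/
def uncovered (G : SimpleGraph V) (M : Fin 3 → G.Subgraph) : Set (Sym2 V) :=
  {e | e ∈ G.edgeSet ∧ ∀ i, e ∉ (M i).edgeSet}

/-- The colouring defect: minimum number of uncovered edges over all 3-arrays. -/
noncomputable def defect (G : SimpleGraph V) : ℕ :=
  sInf {n : ℕ | ∃ M : Fin 3 → G.Subgraph,
    (∀ i, (M i).IsPerfectMatching) ∧ n = (uncovered G M).ncard}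

/-- The number of matchings of the 3-array containing a given edge. -/
noncomputable def coverCount (G : SimpleGraph V) (M : Fin 3 → G.Subgraph)
    (e : Sym2 V) : ℕ :=
  {i : Fin 3 | e ∈ (M i).edgeSet}.ncard

/-- The edge set of the core: edges of `G` not simply covered. -/
def coreEdges (G : SimpleGraph V) (M : Fin 3 → G.Subgraph) : Set (Sym2 V) :=
  {e | e ∈ G.edgeSet ∧ coverCount G M e ≠ 1}

/-- The core of a 3-array, as a graph on `V`. -/
def coreGraph (G : SimpleGraph V) (M : Fin 3 → G.Subgraph) : SimpleGraph V where
  Adj u w := G.Adj u w ∧ coverCount G M s(u, w) ≠ 1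
  symm := by
    constructor
    intro u w h
    refine ⟨h.1.symm, ?_⟩
    rw [Sym2.eq_swap]
    exact h.2
  loopless := by
    constructor
    intro v h
    exact G.irrefl h.1

/-!
Every perfect matching meets the three edges at a vertex exactly once, so the cover counts at a
vertex sum to `3`. Hence two doubly covered edges never meet, and, since an edge covered three
times would leave four uncovered edges next to it (more than an optimal array has), neither do two
uncovered edges. On a triangle it therefore suffices to rule out a doubly covered edge. With counts
`2, 1, 1` the matching through a singly covered triangle edge has no edge left at the third vertex.
With counts `2, 0, 1` the edges of count `≠ 1` close up, through the triangle, into a 4-cycle or a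
6-cycle whose edges in some `M i` are all doubly covered while one of the others is uncovered;
switching `M i` along that cycle leaves fewer uncovered edges than the defect allows.
-/

section General

variable {α : Type*}

lemma four_le_ncard {s : Set α} (hs : s.Finite) {a b c d : α}
    (ha : a ∈ s) (hb : b ∈ s) (hc : c ∈ s) (hd : d ∈ s)
    (hab : a ≠ b) (hac : a ≠ c) (had : a ≠ d) (hbc : b ≠ c) (hbd : b ≠ d) (hcd : c ≠ d) :
    4 ≤ s.ncard := by
  have h4 : ({a, b, c, d} : Set α).ncard = 4 := by
    rw [Set.ncard_insert_of_notMem (by simp [hab, hac, had]),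
      Set.ncard_insert_of_notMem (by simp [hbc, hbd]), Set.ncard_pair hcd]
  exact h4 ▸ Set.ncard_le_ncard (by simp [Set.insert_subset_iff, *]) hs

lemma Sym2.ne_mk_of_notMem {e : Sym2 α} {a b : α} (h : a ∉ e) : e ≠ s(a, b) :=
  fun he => h (he ▸ Sym2.mem_mk_left a b)

lemma SimpleGraph.Subgraph.IsMatching.sup_subgraphOfAdj {G : SimpleGraph α} {H : G.Subgraph}
    (hH : H.IsMatching) {a b : α} (hab : G.Adj a b) (ha : a ∉ H.verts) (hb : b ∉ H.verts) :
    (H ⊔ G.subgraphOfAdj hab).IsMatching :=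
  hH.sup (.subgraphOfAdj hab) <| by
    rw [hH.support_eq_verts, support_subgraphOfAdj]
    exact Set.disjoint_left.mpr fun v hv hv' => by rcases hv' with rfl | rfl <;> contradiction

lemma SimpleGraph.Subgraph.IsPerfectMatching.exists_switch {G : SimpleGraph α}
    {N A B : G.Subgraph} (hN : N.IsPerfectMatching) (hAN : A ≤ N) (hA : A.IsMatching)
    (hB : B.IsMatching) (hAB : B.verts = A.verts) :
    ∃ N' : G.Subgraph, N'.IsPerfectMatching ∧ B ≤ N' ∧ N ≤ N' ⊔ A := by
  have hclosed : ∀ ⦃v w⦄, N.Adj v w → v ∈ A.verts → A.Adj v w := by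
    intro v w hvw hv
    obtain ⟨w', hw', -⟩ := hA hv
    rwa [hN.1.eq_of_adj_left hvw (hAN.2 hw')]
  have hout : ∀ ⦃v w⦄, N.Adj v w → v ∉ A.verts → w ∉ A.verts :=
    fun v w hvw hv hw => hv (A.edge_vert (hclosed hvw.symm hw).symm)
  refine ⟨B ⊔ N.deleteVerts A.verts, ⟨hB.sup ?_ ?_, fun v => ?_⟩, le_sup_left, ?_, ?_⟩
  · rintro v ⟨hv, hvA⟩
    obtain ⟨w, hw, huniq⟩ := hN.1 hv
    exact ⟨w, Subgraph.deleteVerts_adj.mpr ⟨hv, hvA, N.edge_vert hw.symm, hout hw hvA, hw⟩,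
      fun y hy => huniq y (Subgraph.deleteVerts_adj.mp hy).2.2.2.2⟩
  · refine Set.disjoint_left.mpr fun v hvB hvN => ?_
    have hv := (N.deleteVerts A.verts).support_subset_verts hvN
    exact hv.2 (hAB ▸ B.support_subset_verts hvB)
  · by_cases hv : v ∈ A.verts
    · exact Or.inl (hAB ▸ hv)
    · exact Or.inr ⟨hN.2 v, hv⟩
  · intro v _
    by_cases hv : v ∈ A.verts
    · exact Or.inr hv
    · exact Or.inl (Or.inr ⟨hN.2 v, hv⟩)
  · intro v w hvw
    by_cases hv : v ∈ A.verts
    · exact Or.inr (hclosed hvw hv)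
    · exact Or.inl (Or.inr (Subgraph.deleteVerts_adj.mpr
        ⟨hN.2 v, hv, hN.2 w, hout hvw hv, hvw⟩))

end General

section CoverCount

variable {W : Type} {G : SimpleGraph W} {M : Fin 3 → G.Subgraph}

lemma IsCubic.exists_neighborSet_eq (hG : IsCubic G) {v a : W} (ha : G.Adj v a) :
    ∃ b c, a ≠ b ∧ a ≠ c ∧ b ≠ c ∧ G.neighborSet v = {a, b, c} := by
  obtain ⟨x, y, z, hxy, hxz, hyz, hv⟩ := Set.ncard_eq_three.mp (hG v)
  have ha' : a ∈ G.neighborSet v := ha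
  rw [hv] at ha'
  rcases ha' with rfl | rfl | rfl
  · exact ⟨y, z, hxy, hxz, hyz, hv⟩
  · exact ⟨x, z, hxy.symm, hyz, hxz, hv.trans (Set.insert_comm _ _ _)⟩
  · refine ⟨x, y, hxz.symm, hyz.symm, hxy, hv.trans ?_⟩
    rw [Set.pair_comm, Set.insert_comm]

lemma IsCubic.exists_neighborSet_eq_of_adj_of_adj (hG : IsCubic G) {v a b : W}
    (ha : G.Adj v a) (hb : G.Adj v b) (hab : a ≠ b) :
    ∃ c, a ≠ c ∧ b ≠ c ∧ G.neighborSet v = {a, b, c} := by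
  obtain ⟨x, y, hax, hay, hxy, hv⟩ := hG.exists_neighborSet_eq ha
  have hb' : b ∈ G.neighborSet v := hb
  rw [hv] at hb'
  rcases hb' with rfl | rfl | rfl
  · exact absurd rfl hab
  · exact ⟨y, hay, hxy, hv⟩
  · exact ⟨x, hax, hxy.symm, hv.trans (by rw [Set.pair_comm])⟩

lemma SimpleGraph.Subgraph.IsPerfectMatching.adj_or_adj_or_adj {N : G.Subgraph}
    (hN : N.IsPerfectMatching) {v a b c : W} (hv : G.neighborSet v = {a, b, c}) :
    N.Adj v a ∨ N.Adj v b ∨ N.Adj v c := by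
  obtain ⟨w, hw, -⟩ := hN.1 (hN.2 v)
  have hw' : w ∈ G.neighborSet v := N.adj_sub hw
  rw [hv] at hw'
  rcases hw' with rfl | rfl | rfl <;> simp [hw]

lemma coverCount_eq_zero_iff {e : Sym2 W} :
    coverCount G M e = 0 ↔ ∀ i, e ∉ (M i).edgeSet := by
  rw [coverCount, Set.ncard_eq_zero (Set.toFinite _), Set.eq_empty_iff_forall_notMem]
  simp

lemma exists_mem_of_coverCount_ne_zero {e : Sym2 W} (h : coverCount G M e ≠ 0) :
    ∃ i, e ∈ (M i).edgeSet := by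
  simpa [coverCount_eq_zero_iff] using h

lemma mem_uncovered {e : Sym2 W} (he : e ∈ G.edgeSet) (h : coverCount G M e = 0) :
    e ∈ uncovered G M :=
  ⟨he, coverCount_eq_zero_iff.mp h⟩

lemma exists_ne_mem_of_one_lt_coverCount {e : Sym2 W} (h : 1 < coverCount G M e) (i : Fin 3) :
    ∃ j ≠ i, e ∈ (M j).edgeSet := by
  by_contra! hj
  have hsub : {j | e ∈ (M j).edgeSet} ⊆ {i} := fun j hje => by_contra fun hji => hj j hji hje
  exact h.not_ge ((Set.ncard_le_ncard hsub).trans_eq (Set.ncard_singleton i))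

lemma exists_mem_mem_of_three_lt_coverCount_add {e f : Sym2 W}
    (h : 3 < coverCount G M e + coverCount G M f) :
    ∃ i, e ∈ (M i).edgeSet ∧ f ∈ (M i).edgeSet := by
  have hunion := Set.ncard_union_add_ncard_inter {i | e ∈ (M i).edgeSet} {i | f ∈ (M i).edgeSet}
  have hle : ({i | e ∈ (M i).edgeSet} ∪ {i | f ∈ (M i).edgeSet}).ncard ≤ 3 :=
    (Set.ncard_le_ncard (Set.subset_univ _)).trans (by simp)
  exact Set.nonempty_of_ncard_ne_zero (s := {i | e ∈ (M i).edgeSet} ∩ {i | f ∈ (M i).edgeSet})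
    (by unfold coverCount at h; omega)

lemma coverCount_add_coverCount_add_coverCount (hM : ∀ i, (M i).IsPerfectMatching)
    {v a b c : W} (hv : G.neighborSet v = {a, b, c}) (hab : a ≠ b) (hac : a ≠ c) (hbc : b ≠ c) :
    coverCount G M s(v, a) + coverCount G M s(v, b) + coverCount G M s(v, c) = 3 := by
  classical
  have hsum : ∀ e, coverCount G M e = ∑ i, if e ∈ (M i).edgeSet then 1 else 0 := fun e => by
    rw [coverCount, Set.ncard_eq_toFinset_card', Set.toFinset_ofPred, Finset.card_filter]
  have hone : ∀ i, ((if s(v, a) ∈ (M i).edgeSet then 1 else 0) +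
      (if s(v, b) ∈ (M i).edgeSet then 1 else 0)) +
      (if s(v, c) ∈ (M i).edgeSet then 1 else 0) = 1 := by
    intro i
    have hi := (hM i).1
    rcases (hM i).adj_or_adj_or_adj hv with h | h | h
    · simp [h, hi.not_adj_left_of_ne hab h, hi.not_adj_left_of_ne hac h]
    · simp [h, hi.not_adj_left_of_ne hab.symm h, hi.not_adj_left_of_ne hbc h]
    · simp [h, hi.not_adj_left_of_ne hac.symm h, hi.not_adj_left_of_ne hbc.symm h]
  simp only [hsum, ← Finset.sum_add_distrib, hone]
  simp

end CoverCount

section Optimal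

variable {W : Type} {G : SimpleGraph W} {M : Fin 3 → G.Subgraph}
  (hG : IsCubic G) (hM : ∀ i, (M i).IsPerfectMatching)
include hG hM

lemma coverCount_add_coverCount_le_three {v a b : W} (ha : G.Adj v a) (hb : G.Adj v b)
    (hab : a ≠ b) : coverCount G M s(v, a) + coverCount G M s(v, b) ≤ 3 := by
  obtain ⟨c, hac, hbc, hv⟩ := hG.exists_neighborSet_eq_of_adj_of_adj ha hb hab
  have := coverCount_add_coverCount_add_coverCount hM hv hab hac hbc
  omega

lemma eq_of_coverCount_eq_two {v a b : W} (ha : G.Adj v a) (hb : G.Adj v b)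
    (ha2 : coverCount G M s(v, a) = 2) (hb2 : coverCount G M s(v, b) = 2) : a = b := by
  by_contra hab
  have := coverCount_add_coverCount_le_three hG hM ha hb hab
  omega

lemma exists_adj_coverCount_eq_zero_of_eq_two {v a : W} (ha : G.Adj v a)
    (h2 : coverCount G M s(v, a) = 2) : ∃ b, G.Adj v b ∧ coverCount G M s(v, b) = 0 := by
  obtain ⟨b, c, hab, hac, hbc, hv⟩ := hG.exists_neighborSet_eq ha
  have := coverCount_add_coverCount_add_coverCount hM hv hab hac hbc
  by_cases hb : coverCount G M s(v, b) = 0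
  · exact ⟨b, by simp [← mem_neighborSet, hv], hb⟩
  · exact ⟨c, by simp [← mem_neighborSet, hv], by omega⟩

variable [Finite W] (h3 : (uncovered G M).ncard ≤ 3)
include h3

lemma coverCount_ne_three {v w : W} (hvw : G.Adj v w) : coverCount G M s(v, w) ≠ 3 := by
  intro h
  obtain ⟨a, b, hwa, hwb, hab, hv⟩ := hG.exists_neighborSet_eq hvw
  obtain ⟨c, d, hvc, hvd, hcd, hw⟩ := hG.exists_neighborSet_eq hvw.symm
  have hsv := coverCount_add_coverCount_add_coverCount hM hv hwa hwb hab
  have hsw := coverCount_add_coverCount_add_coverCount hM hw hvc hvd hcd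
  rw [Sym2.eq_swap, h] at hsw
  have := four_le_ncard (Set.toFinite (uncovered G M))
    (mem_uncovered (by simp [← mem_neighborSet, hv]) (by omega : coverCount G M s(v, a) = 0))
    (mem_uncovered (by simp [← mem_neighborSet, hv]) (by omega : coverCount G M s(v, b) = 0))
    (mem_uncovered (by simp [← mem_neighborSet, hw]) (by omega : coverCount G M s(w, c) = 0))
    (mem_uncovered (by simp [← mem_neighborSet, hw]) (by omega : coverCount G M s(w, d) = 0))
    (Sym2.congr_right.not.mpr hab) (Sym2.ne_mk_of_notMem (by simp [hvw.ne', hwa]))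
    (Sym2.ne_mk_of_notMem (by simp [hvw.ne', hwa]))
    (Sym2.ne_mk_of_notMem (by simp [hvw.ne', hwb]))
    (Sym2.ne_mk_of_notMem (by simp [hvw.ne', hwb])) (Sym2.congr_right.not.mpr hcd)
  omega

lemma coverCount_ne_zero_of_coverCount_eq_zero {v a b : W} (ha : G.Adj v a) (hb : G.Adj v b)
    (hab : a ≠ b) (ha0 : coverCount G M s(v, a) = 0) : coverCount G M s(v, b) ≠ 0 := by
  intro hb0
  obtain ⟨c, hac, hbc, hv⟩ := hG.exists_neighborSet_eq_of_adj_of_adj ha hb hab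
  have hvc : G.Adj v c := by simp [← mem_neighborSet, hv]
  have := coverCount_add_coverCount_add_coverCount hM hv hab hac hbc
  exact coverCount_ne_three hG hM h3 hvc (by omega)

lemma exists_adj_coverCount_eq_two_of_eq_zero {v a : W} (ha : G.Adj v a)
    (h0 : coverCount G M s(v, a) = 0) : ∃ b, G.Adj v b ∧ coverCount G M s(v, b) = 2 := by
  obtain ⟨b, c, hab, hac, hbc, hv⟩ := hG.exists_neighborSet_eq ha
  have hvb : G.Adj v b := by simp [← mem_neighborSet, hv]
  have hvc : G.Adj v c := by simp [← mem_neighborSet, hv]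
  have := coverCount_add_coverCount_add_coverCount hM hv hab hac hbc
  have := coverCount_ne_three hG hM h3 hvb
  have := coverCount_ne_three hG hM h3 hvc
  by_cases hb : coverCount G M s(v, b) = 2
  · exact ⟨b, hvb, hb⟩
  · exact ⟨c, hvc, by omega⟩

lemma adj_of_coverCount_eq_two_of_mem_uncovered {e₁ e₂ : Sym2 W} (he₁ : e₁ ∈ uncovered G M)
    (he₂ : e₂ ∈ uncovered G M) (he : e₁ ≠ e₂) {v v' w w' : W} (hv : G.Adj v v')
    (hw : G.Adj w w') (hv2 : coverCount G M s(v, v') = 2) (hw2 : coverCount G M s(w, w') = 2)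
    (hvw : v ≠ w) (hv₁ : v ∉ e₁) (hv₂ : v ∉ e₂) (hw₁ : w ∉ e₁) (hw₂ : w ∉ e₂) : G.Adj v w := by
  obtain ⟨x, hvx, hvx0⟩ := exists_adj_coverCount_eq_zero_of_eq_two hG hM hv hv2
  obtain ⟨y, hwy, hwy0⟩ := exists_adj_coverCount_eq_zero_of_eq_two hG hM hw hw2
  by_contra hvw'
  have hwx : w ≠ x := by rintro rfl; exact hvw' hvx
  have := four_le_ncard (Set.toFinite _) he₁ he₂ (mem_uncovered hvx hvx0)
    (mem_uncovered hwy hwy0) he (Sym2.ne_mk_of_notMem hv₁) (Sym2.ne_mk_of_notMem hw₁)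
    (Sym2.ne_mk_of_notMem hv₂) (Sym2.ne_mk_of_notMem hw₂)
    (Sym2.ne_mk_of_notMem (by simp [hvw.symm, hwx]))
  omega

end Optimal

section Switching

variable {W : Type} [Finite W] {G : SimpleGraph W} {M : Fin 3 → G.Subgraph}
  (hM : ∀ i, (M i).IsPerfectMatching)
include hM

lemma defect_lt_of_switch {i : Fin 3} {A B : G.Subgraph} (hAM : A ≤ M i) (hA : A.IsMatching)
    (hB : B.IsMatching) (hAB : B.verts = A.verts) (hA2 : ∀ e ∈ A.edgeSet, 1 < coverCount G M e)
    {e : Sym2 W} (heB : e ∈ B.edgeSet) (he : e ∈ uncovered G M) :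
    defect G < (uncovered G M).ncard := by
  obtain ⟨N, hN, hBN, hMN⟩ := (hM i).exists_switch hAM hA hB hAB
  set M' := Function.update M i N
  have hM' : ∀ j, (M' j).IsPerfectMatching := fun j => by
    rcases eq_or_ne j i with rfl | hj
    · simpa [M'] using hN
    · simpa [M', hj] using hM j
  have hsub : uncovered G M' ⊆ uncovered G M \ {e} := by
    rintro f ⟨hfG, hf⟩
    have hfN : f ∉ N.edgeSet := by simpa [M'] using hf i
    have hfj : ∀ j ≠ i, f ∉ (M j).edgeSet := fun j hj => by simpa [M', hj] using hf j
    refine ⟨⟨hfG, fun j hfM => ?_⟩, fun hfe => hfN (hfe ▸ Subgraph.edgeSet_mono hBN heB)⟩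
    rcases eq_or_ne j i with rfl | hj
    · have hfNA := Subgraph.edgeSet_mono hMN hfM
      rw [Subgraph.edgeSet_sup] at hfNA
      rcases hfNA with hfN' | hfA
      · exact hfN hfN'
      · obtain ⟨k, hk, hfk⟩ := exists_ne_mem_of_one_lt_coverCount (hA2 f hfA) j
        exact hfj k hk hfk
    · exact hfj j hj hfM
  calc defect G ≤ (uncovered G M').ncard := Nat.sInf_le ⟨M', hM', rfl⟩
    _ ≤ (uncovered G M \ {e}).ncard := Set.ncard_le_ncard hsub
    _ < (uncovered G M).ncard := Set.ncard_sdiff_singleton_lt_of_mem he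

lemma defect_lt_of_alternating_square {i : Fin 3} {v₀ v₁ v₂ v₃ : W}
    (h₀₁ : (M i).Adj v₀ v₁) (h₂₃ : (M i).Adj v₂ v₃) (h₁₂ : G.Adj v₁ v₂) (h₃₀ : G.Adj v₃ v₀)
    (c₀₁ : 1 < coverCount G M s(v₀, v₁)) (c₂₃ : 1 < coverCount G M s(v₂, v₃))
    (hu : s(v₃, v₀) ∈ uncovered G M) (h₀₂ : v₀ ≠ v₂) (h₁₃ : v₁ ≠ v₃) :
    defect G < (uncovered G M).ncard := by
  have := h₀₁.ne; have := h₂₃.ne; have := h₁₂.ne; have := h₃₀.ne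
  refine defect_lt_of_switch hM
    (A := G.subgraphOfAdj ((M i).adj_sub h₀₁) ⊔ G.subgraphOfAdj ((M i).adj_sub h₂₃))
    (B := G.subgraphOfAdj h₁₂ ⊔ G.subgraphOfAdj h₃₀)
    (sup_le (subgraphOfAdj_le_of_adj _ h₀₁) (subgraphOfAdj_le_of_adj _ h₂₃))
    ((Subgraph.IsMatching.subgraphOfAdj _).sup_subgraphOfAdj _ (by simp; grind) (by simp; grind))
    ((Subgraph.IsMatching.subgraphOfAdj _).sup_subgraphOfAdj _ (by simp; grind) (by simp; grind))
    (by ext; simp; tauto) ?_ (by simp) hu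
  simp only [Subgraph.edgeSet_sup, edgeSet_subgraphOfAdj]
  rintro e (rfl | rfl) <;> assumption

lemma defect_lt_of_alternating_hexagon {i : Fin 3} {v₀ v₁ v₂ v₃ v₄ v₅ : W}
    (h₀₁ : (M i).Adj v₀ v₁) (h₂₃ : (M i).Adj v₂ v₃) (h₄₅ : (M i).Adj v₄ v₅)
    (h₁₂ : G.Adj v₁ v₂) (h₃₄ : G.Adj v₃ v₄) (h₅₀ : G.Adj v₅ v₀)
    (c₀₁ : 1 < coverCount G M s(v₀, v₁)) (c₂₃ : 1 < coverCount G M s(v₂, v₃))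
    (c₄₅ : 1 < coverCount G M s(v₄, v₅)) (hu : s(v₅, v₀) ∈ uncovered G M)
    (h₀₂ : v₀ ≠ v₂) (h₀₃ : v₀ ≠ v₃) (h₀₄ : v₀ ≠ v₄) (h₁₃ : v₁ ≠ v₃) (h₁₄ : v₁ ≠ v₄)
    (h₁₅ : v₁ ≠ v₅) (h₂₄ : v₂ ≠ v₄) (h₂₅ : v₂ ≠ v₅) (h₃₅ : v₃ ≠ v₅) :
    defect G < (uncovered G M).ncard := by
  have := h₀₁.ne; have := h₂₃.ne; have := h₄₅.ne; have := h₁₂.ne; have := h₃₄.ne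
  have := h₅₀.ne
  refine defect_lt_of_switch hM
    (A := G.subgraphOfAdj ((M i).adj_sub h₀₁) ⊔ G.subgraphOfAdj ((M i).adj_sub h₂₃) ⊔
      G.subgraphOfAdj ((M i).adj_sub h₄₅))
    (B := G.subgraphOfAdj h₁₂ ⊔ G.subgraphOfAdj h₃₄ ⊔ G.subgraphOfAdj h₅₀)
    (sup_le (sup_le (subgraphOfAdj_le_of_adj _ h₀₁) (subgraphOfAdj_le_of_adj _ h₂₃))
      (subgraphOfAdj_le_of_adj _ h₄₅))
    (((Subgraph.IsMatching.subgraphOfAdj _).sup_subgraphOfAdj _ (by simp; grind)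
      (by simp; grind)).sup_subgraphOfAdj _ (by simp; grind) (by simp; grind))
    (((Subgraph.IsMatching.subgraphOfAdj _).sup_subgraphOfAdj _ (by simp; grind)
      (by simp; grind)).sup_subgraphOfAdj _ (by simp; grind) (by simp; grind))
    (by ext; simp; tauto) ?_ (by simp) hu
  simp only [Subgraph.edgeSet_sup, edgeSet_subgraphOfAdj]
  rintro e ((rfl | rfl) | rfl) <;> assumption

end Switching

section Triangle

variable {W : Type} {G : SimpleGraph W} {M : Fin 3 → G.Subgraph}
  (hG : IsCubic G) (hM : ∀ i, (M i).IsPerfectMatching)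
include hG hM

lemma false_of_triangle_coverCount_two_one_one {p q r : W}
    (hpq : G.Adj p q) (hqr : G.Adj q r) (hpr : G.Adj p r)
    (h2 : coverCount G M s(p, q) = 2) (h1 : coverCount G M s(p, r) = 1)
    (h1' : coverCount G M s(q, r) = 1) : False := by
  obtain ⟨u, hpu, hru, hq⟩ := hG.exists_neighborSet_eq_of_adj_of_adj hpq.symm hqr hpr.ne
  have hu : coverCount G M s(q, u) = 0 := by
    have := coverCount_add_coverCount_add_coverCount hM hq hpr.ne hpu hru
    rw [Sym2.eq_swap (a := q) (b := p)] at this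
    omega
  obtain ⟨i, hi : (M i).Adj p r⟩ :=
    exists_mem_of_coverCount_ne_zero (M := M) (e := s(p, r)) (by omega)
  rcases (hM i).adj_or_adj_or_adj hq with h | h | h
  · exact hqr.ne ((hM i).1.eq_of_adj_left h.symm hi)
  · exact hpq.ne ((hM i).1.eq_of_adj_right hi h)
  · exact coverCount_eq_zero_iff.mp hu i h

variable [Finite W]

lemma false_of_triangle_alternating_path (hopt : (uncovered G M).ncard ≤ defect G)
    (h3 : (uncovered G M).ncard ≤ 3) {p q r u w : W}
    (hpq : G.Adj p q) (hpr : G.Adj p r) (hqu : G.Adj q u) (hrw : G.Adj r w)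
    (h2 : coverCount G M s(p, q) = 2) (hrp : s(r, p) ∈ uncovered G M)
    (hqu0 : coverCount G M s(u, q) = 0) (hrw2 : coverCount G M s(r, w) = 2)
    (hwr_of : ∀ i, (M i).Adj p q → (M i).Adj w r) (hpu : p ≠ u) (hpw : p ≠ w) (hqr : q ≠ r)
    (hqw : q ≠ w) (hru : r ≠ u) (hwu : w ≠ u) : False := by
  have hwr2 : coverCount G M s(w, r) = 2 := by rwa [Sym2.eq_swap]
  obtain ⟨x, hux, hux2⟩ := exists_adj_coverCount_eq_two_of_eq_zero hG hM h3 hqu.symm hqu0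
  have hxu2 : coverCount G M s(x, u) = 2 := by rwa [Sym2.eq_swap]
  have hxq : x ≠ q := by rintro rfl; omega
  have hxp : x ≠ p := by
    rintro rfl
    exact hqu.ne (eq_of_coverCount_eq_two hG hM hpq hux.symm h2 hxu2)
  have hxr : x ≠ r := by
    rintro rfl
    exact hwu (eq_of_coverCount_eq_two hG hM hrw hux.symm hrw2 hxu2)
  have hxw : x ≠ w := by
    rintro rfl
    exact hru (eq_of_coverCount_eq_two hG hM hrw.symm hux.symm hwr2 hxu2)
  have hxw_adj : G.Adj x w :=
    adj_of_coverCount_eq_two_of_mem_uncovered hG hM h3 hrp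
      (mem_uncovered hqu (by rwa [Sym2.eq_swap])) (Sym2.ne_mk_of_notMem (by simp [hqr, hpq.ne']))
      hux.symm hrw.symm hxu2 hwr2 hxw (by simp [hxr, hxp]) (by simp [hxq, hux.ne'])
      (by simp [hrw.ne', hpw.symm]) (by simp [hqw.symm, hwu])
  obtain ⟨i, hpq_i : (M i).Adj p q, hux_i : (M i).Adj u x⟩ :=
    exists_mem_mem_of_three_lt_coverCount_add (M := M) (e := s(p, q)) (f := s(u, x)) (by omega)
  exact (defect_lt_of_alternating_hexagon hM hpq_i hux_i (hwr_of i hpq_i) hqu hxw_adj hpr.symm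
    (by omega) (by omega) (by omega) hrp hpu hxp.symm hpw hxq.symm hqw hqr hwu.symm
    hru.symm hxr).not_ge hopt

lemma false_of_triangle_coverCount_two_zero_one (hopt : (uncovered G M).ncard ≤ defect G)
    (h3 : (uncovered G M).ncard ≤ 3) {p q r : W}
    (hpq : G.Adj p q) (hqr : G.Adj q r) (hpr : G.Adj p r)
    (h2 : coverCount G M s(p, q) = 2) (h0 : coverCount G M s(p, r) = 0)
    (h1 : coverCount G M s(q, r) = 1) : False := by
  obtain ⟨w, hpw, hqw, hr⟩ := hG.exists_neighborSet_eq_of_adj_of_adj hpr.symm hqr.symm hpq.ne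
  obtain ⟨u, hpu, hru, hq⟩ := hG.exists_neighborSet_eq_of_adj_of_adj hpq.symm hqr hpr.ne
  have hrw : G.Adj r w := by simp [← mem_neighborSet, hr]
  have hqu : G.Adj q u := by simp [← mem_neighborSet, hq]
  have hrw2 : coverCount G M s(r, w) = 2 := by
    have := coverCount_add_coverCount_add_coverCount hM hr hpq.ne hpw hqw
    rw [Sym2.eq_swap (a := r) (b := p), Sym2.eq_swap (a := r) (b := q)] at this
    omega
  have hqu0 : coverCount G M s(u, q) = 0 := by
    have := coverCount_add_coverCount_add_coverCount hM hq hpr.ne hpu hru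
    rw [Sym2.eq_swap (a := q) (b := p), Sym2.eq_swap (a := q) (b := u)] at this
    omega
  have hrp : s(r, p) ∈ uncovered G M := mem_uncovered hpr.symm (by rwa [Sym2.eq_swap])
  have hwr_of : ∀ i, (M i).Adj p q → (M i).Adj w r := by
    intro i hi
    rcases (hM i).adj_or_adj_or_adj hr with h | h | h
    · exact absurd h.symm (coverCount_eq_zero_iff.mp h0 i)
    · exact absurd ((hM i).1.eq_of_adj_right hi h) hpr.ne
    · exact h.symm
  by_cases hwu : w = u
  · subst hwu
    obtain ⟨i, hi : (M i).Adj p q⟩ :=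
      exists_mem_of_coverCount_ne_zero (M := M) (e := s(p, q)) (by omega)
    exact (defect_lt_of_alternating_square hM hi (hwr_of i hi) hqu hpr.symm (by omega)
      (by rw [Sym2.eq_swap]; omega) hrp hpw hqr.ne).not_ge hopt
  exact false_of_triangle_alternating_path hG hM hopt h3 hpq hpr hqu hrw h2 hrp
    hqu0 hrw2 hwr_of hpu hpw hqr.ne hqw hru hwu

lemma coverCount_le_one_of_triangle (hopt : (uncovered G M).ncard ≤ defect G)
    (h3 : (uncovered G M).ncard ≤ 3) {p q r : W}
    (hpq : G.Adj p q) (hqr : G.Adj q r) (hpr : G.Adj p r) : coverCount G M s(p, q) ≤ 1 := by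
  have hp := coverCount_add_coverCount_le_three hG hM hpq hpr hqr.ne
  have hq := coverCount_add_coverCount_le_three hG hM hpq.symm hqr hpr.ne
  have hr := coverCount_ne_zero_of_coverCount_eq_zero hG hM h3 hpr.symm hqr.symm hpq.ne
  rw [Sym2.eq_swap (a := q) (b := p)] at hq
  rw [Sym2.eq_swap (a := r) (b := p), Sym2.eq_swap (a := r) (b := q)] at hr
  have h3' := coverCount_ne_three hG hM h3 hpq
  by_contra! h
  have h2 : coverCount G M s(p, q) = 2 := by omega
  rcases (by omega : coverCount G M s(p, r) = 1 ∧ coverCount G M s(q, r) = 1 ∨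
      coverCount G M s(p, r) = 0 ∨ coverCount G M s(q, r) = 0) with ⟨h1, h1'⟩ | h0 | h0
  · exact false_of_triangle_coverCount_two_one_one hG hM hpq hqr hpr h2 h1 h1'
  · exact false_of_triangle_coverCount_two_zero_one hG hM hopt h3 hpq hqr hpr h2 h0 (by omega)
  · exact false_of_triangle_coverCount_two_zero_one hG hM hopt h3 hpq.symm hpr hqr
      (by rwa [Sym2.eq_swap]) h0 (by omega)

end Triangle

theorem stmt_15_general (G : SimpleGraph V) (hG : IsSnark G) (hdf : defect G = 3)
    (M : Fin 3 → G.Subgraph) (hM : ∀ i, (M i).IsPerfectMatching)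
    (hopt : (uncovered G M).ncard = 3)
    (a b c : V)
    (hT : G.Adj a b ∧ G.Adj b c ∧ G.Adj a c)
    (hint : (coreEdges G M ∩ {s(a, b), s(b, c), s(a, c)}).Nonempty) :
    ∃ e : Sym2 V, coreEdges G M ∩ {s(a, b), s(b, c), s(a, c)} = {e} ∧
      coverCount G M e = 0 := by
  obtain ⟨hab, hbc, hac⟩ := hT
  have hcub := hG.1
  have hle : (uncovered G M).ncard ≤ defect G := (hopt.trans hdf.symm).le
  have hab1 := coverCount_le_one_of_triangle hcub hM hle hopt.le hab hbc hac
  have hbc1 := coverCount_le_one_of_triangle hcub hM hle hopt.le hbc hac.symm hab.symm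
  have hac1 := coverCount_le_one_of_triangle hcub hM hle hopt.le hac hbc.symm hab
  have ha := coverCount_ne_zero_of_coverCount_eq_zero hcub hM hopt.le hab hac hbc.ne
  have hb := coverCount_ne_zero_of_coverCount_eq_zero hcub hM hopt.le hab.symm hbc hac.ne
  have hc := coverCount_ne_zero_of_coverCount_eq_zero hcub hM hopt.le hac.symm hbc.symm hab.ne
  rw [Sym2.eq_swap (a := b) (b := a)] at hb
  rw [Sym2.eq_swap (a := c) (b := a), Sym2.eq_swap (a := c) (b := b)] at hc
  have hzero : ∀ e ∈ coreEdges G M ∩ {s(a, b), s(b, c), s(a, c)}, coverCount G M e = 0 := by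
    rintro e ⟨⟨-, he⟩, rfl | rfl | rfl⟩ <;> omega
  obtain ⟨e, he⟩ := hint
  refine ⟨e, Set.eq_singleton_iff_unique_mem.mpr ⟨he, fun f hf => ?_⟩, hzero e he⟩
  have := hzero e he
  have := hzero f hf
  rcases hf.2 with rfl | rfl | rfl <;> rcases he.2 with rfl | rfl | rfl <;> first | rfl | omega

theorem stmt_15 (G : SimpleGraph V) (hG : IsSnark G) (hdf : defect G = 3)
    (M : Fin 3 → G.Subgraph) (hM : ∀ i, (M i).IsPerfectMatching)
    (hopt : (uncovered G M).ncard = 3)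
    (a b c : V) (hab : a ≠ b) (hac : a ≠ c) (hbc : b ≠ c)
    (hT : G.Adj a b ∧ G.Adj b c ∧ G.Adj a c)
    (hint : (coreEdges G M ∩ {s(a, b), s(b, c), s(a, c)}).Nonempty) :
    ∃ e : Sym2 V, coreEdges G M ∩ {s(a, b), s(b, c), s(a, c)} = {e} ∧
      coverCount G M e = 0 :=
  stmt_15_general G hG hdf M hM hopt a b c hT hint
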